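/- arXiv:0805.3253 — 3 statements merged into one kernel-verified Lean document; each statement's English description precedes it below -/
import Mathlib

section
/- Let n ∈ ℕ, a ∈ ℂ, b ∈ ℝ, and define V₀(z) = a·exp(−(n/2)·Log((z−b)²)) (the analytic extension of a/|z−b|^n) on the domain 𝒟 = { x + √i·y : x ∈ ℝ\{b}, y ∈ ℝ }. Then for all x ∈ ℝ\{b} and all y, y' ∈ ℝ, |V₀(x + √i·y + √i·y')| ≤ |a|·exp(−(n/2)·log((x−b)²/2)) = |a|·(2/(x−b)²)^{n/2}. -/
open MeasureTheory ProbabilityTheory Filter Complex Set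

noncomputable section

/-- The principal square root of `i`, i.e. `e^{iπ/4}`. -/
def sqrtI : ℂ := Complex.exp (Real.pi / 4 * Complex.I)

/-- A standard one-dimensional Brownian motion starting at `0`. -/
structure IsBrownianMotion {Ω : Type*} [MeasureSpace Ω] (B : ℝ → Ω → ℝ) : Prop where
  meas : ∀ t, Measurable (B t)
  init : ∀ᵐ ω ∂(volume : Measure Ω), B 0 ω = 0
  cont : ∀ᵐ ω ∂(volume : Measure Ω), Continuous fun t => B t ω
  gauss : ∀ s t : ℝ, 0 ≤ s → s ≤ t →
    Measure.map (fun ω => B t ω - B s ω) (volume : Measure Ω)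
      = gaussianReal 0 (Real.toNNReal (t - s))
  indep : ∀ (n : ℕ) (ts : Fin (n + 1) → ℝ), Monotone ts →
    iIndepFun (m := fun _ => Real.measurableSpace)
      (fun i : Fin n => fun ω => B (ts i.succ) ω - B (ts i.castSucc) ω)
      (volume : Measure Ω)

/-- `‖B‖_{sup,T} = sup_{0 ≤ s ≤ T} |B_s|`. -/
def supNorm {Ω : Type*} (B : ℝ → Ω → ℝ) (T : ℝ) (ω : Ω) : ℝ :=
  ⨆ s : Set.Icc (0 : ℝ) T, |B (s : ℝ) ω|

/-- The analytic extension to `ℂ` of the `m`-th Hermite function. -/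
def hermiteFun (m : ℕ) (z : ℂ) : ℂ :=
  ((2 : ℂ) ^ m * (Nat.factorial m : ℂ)) ^ (-(1/2 : ℂ)) * (-1) ^ m *
    (Real.pi : ℂ) ^ (-(1/4 : ℂ)) * Complex.exp (z ^ 2 / 2) *
      iteratedDeriv m (fun w : ℂ => Complex.exp (-w ^ 2)) z


lemma sqrtI_re : sqrtI.re = Real.sqrt 2 / 2 := by
  have h : (Real.pi / 4 : ℂ) * Complex.I = ((Real.pi/4 : ℝ) : ℂ) * Complex.I := by push_cast; ring
  rw [sqrtI, h, Complex.exp_ofReal_mul_I_re, Real.cos_pi_div_four]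

lemma sqrtI_im : sqrtI.im = Real.sqrt 2 / 2 := by
  have h : (Real.pi / 4 : ℂ) * Complex.I = ((Real.pi/4 : ℝ) : ℂ) * Complex.I := by push_cast; ring
  rw [sqrtI, h, Complex.exp_ofReal_mul_I_im, Real.sin_pi_div_four]

/-- Uniform bound in the `√i`-direction for the analytic extension of `a/|z-b|^n`. -/
theorem stmt_3 (n : ℕ) (hn : 0 < n) (a : ℂ) (b : ℝ) (x : ℝ) (hx : x ≠ b) (y y' : ℝ) :
    ‖a * Complex.exp (-((n : ℂ) / 2) *
        Complex.log ((((x : ℂ) + sqrtI * (y : ℂ) + sqrtI * (y' : ℂ)) - (b : ℂ)) ^ 2))‖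
      ≤ ‖a‖ * Real.exp (-((n : ℝ) / 2) * Real.log ((x - b) ^ 2 / 2)) ∧
    ‖a‖ * Real.exp (-((n : ℝ) / 2) * Real.log ((x - b) ^ 2 / 2))
      = ‖a‖ * (2 / (x - b) ^ 2) ^ ((n : ℝ) / 2) := by

  set s : ℂ := (x : ℂ) + sqrtI * (y : ℂ) + sqrtI * (y' : ℂ) - (b : ℂ) with hs
  have hxb : (x - b) ≠ 0 := sub_ne_zero.mpr hx
  have hc : (0 : ℝ) < (x - b) ^ 2 / 2 := by positivity
  have hsre : s.re = (x - b) + (y + y') * (Real.sqrt 2 / 2) := by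
    simp [hs, Complex.add_re, Complex.sub_re, Complex.mul_re, sqrtI_re, sqrtI_im]; ring
  have hsim : s.im = (y + y') * (Real.sqrt 2 / 2) := by
    simp [hs, Complex.add_im, Complex.sub_im, Complex.mul_im, sqrtI_re, sqrtI_im]; ring
  have h2 : (Real.sqrt 2 / 2) ^ 2 = 1 / 2 := by
    rw [div_pow, Real.sq_sqrt (by norm_num : (0:ℝ) ≤ 2)]; norm_num
  have hkey : (x - b) ^ 2 / 2 ≤ ‖s ^ 2‖ := by
    rw [norm_pow, Complex.sq_norm, Complex.normSq_apply, hsre, hsim]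
    nlinarith [sq_nonneg ((x - b) + 2 * ((y + y') * (Real.sqrt 2 / 2))), sq_nonneg (x - b),
      sq_nonneg ((y + y') * (Real.sqrt 2 / 2))]
  have hs2 : s ^ 2 ≠ 0 := by
    intro h
    rw [h, norm_zero] at hkey
    linarith
  have hnorm : ‖a * Complex.exp (-((n : ℂ) / 2) * Complex.log (s ^ 2))‖
      = ‖a‖ * Real.exp (-((n : ℝ) / 2) * Real.log ‖s ^ 2‖) := by
    rw [norm_mul, Complex.norm_exp]
    congr 2
    simp [Complex.mul_re, Complex.log_re, Complex.log_im]
  refine ⟨?_, ?_⟩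
  · rw [hnorm]
    gcongr ‖a‖ * Real.exp ?_
    have hlog : Real.log ((x - b) ^ 2 / 2) ≤ Real.log ‖s ^ 2‖ :=
      Real.log_le_log hc hkey
    have : (0:ℝ) ≤ (n : ℝ) / 2 := by positivity
    nlinarith
  · congr 1
    rw [Real.rpow_def_of_pos (by positivity : (0:ℝ) < 2 / (x - b) ^ 2)]
    congr 1
    rw [show (2 : ℝ) / (x - b) ^ 2 = ((x - b) ^ 2 / 2)⁻¹ by field_simp, Real.log_inv]
    ring
end
end

section
/- Let n ∈ ℕ₀, a₀,…,a_{4n+1} ∈ ℂ, a_{4n+2} > 0, and define the polynomial potential V₀(z) = (−1)^{n+1}·a_{4n+2}·z^{4n+2} + Σ_{j=1}^{4n+1} a_j·z^j. Then for every compact set K ⊂ ℂ and every continuous function g : [0,T] → ℝ there is a constant C_K > 0 such that sup_{z∈K} sup_{t∈[0,T]} sup_{y∈ℝ} |exp(|g(t)|·(|z|+|y|) − i·V₀(z + √i·y))| ≤ C_K. -/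
open MeasureTheory ProbabilityTheory Filter Complex Set

noncomputable section

lemma sqrtI_sq : sqrtI ^ 2 = Complex.I := by
  rw [sqrtI, ← Complex.exp_nat_mul]
  have h : ((2:ℕ):ℂ) * (↑Real.pi / 4 * Complex.I) = (↑(Real.pi/2) : ℂ) * Complex.I := by
    push_cast; ring
  rw [h, Complex.exp_mul_I, ← Complex.ofReal_cos, ← Complex.ofReal_sin,
    Real.cos_pi_div_two, Real.sin_pi_div_two]
  simp

lemma norm_sqrtI : ‖sqrtI‖ = 1 := by
  rw [sqrtI, Complex.norm_exp]
  simp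

lemma sqrtI_pow (n : ℕ) : sqrtI ^ (4*n+2) = Complex.I * (-1)^n := by
  have h : 4*n+2 = 2*(2*n+1) := by ring
  rw [h, pow_mul, sqrtI_sq, pow_succ, pow_mul, Complex.I_sq]
  ring

lemma poly_bound (D a42 : ℝ) (hD : 0 ≤ D) (ha : 0 < a42) (p : ℕ) :
    ∃ B, 0 ≤ B ∧ ∀ u : ℝ, 0 ≤ u → D * (1+u)^p - a42 * u^(p+1) ≤ B := by
  set u₀ : ℝ := max 1 (2^p * D / a42) with hu₀
  have h1 : (1:ℝ) ≤ u₀ := le_max_left _ _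
  have hBnn : 0 ≤ D * (1+u₀)^p := mul_nonneg hD (pow_nonneg (by linarith) p)
  refine ⟨D * (1+u₀)^p, hBnn, ?_⟩
  intro u hu
  rcases le_total u u₀ with h | h
  · have h2 : D*(1+u)^p ≤ D*(1+u₀)^p :=
      mul_le_mul_of_nonneg_left (pow_le_pow_left₀ (by linarith) (by linarith) p) hD
    nlinarith [pow_nonneg hu (p+1)]
  · have hu1 : (1:ℝ) ≤ u := le_trans h1 h
    have h2 : 2^p * D ≤ a42 * u := by
      have h3 := le_trans (le_max_right 1 (2^p*D/a42)) h
      rw [div_le_iff₀ ha] at h3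
      linarith
    have h3 : D * (1+u)^p ≤ a42 * u^(p+1) := by
      calc D * (1+u)^p ≤ D * (2*u)^p :=
            mul_le_mul_of_nonneg_left (pow_le_pow_left₀ (by linarith) (by linarith) p) hD
        _ = (2^p * D) * u^p := by rw [mul_pow]; ring
        _ ≤ (a42 * u) * u^p := mul_le_mul_of_nonneg_right h2 (pow_nonneg (by linarith) p)
        _ = a42 * u^(p+1) := by ring
    linarith


/-- Uniform boundedness of `exp(|g(t)|(|z|+|y|) - i V₀(z + √i y))` for the
polynomial potential `V₀(z) = (-1)^{n+1} a_{4n+2} z^{4n+2} + Σ_{j=1}^{4n+1} a_j z^j`. -/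
theorem stmt_5 (n : ℕ) (a : ℕ → ℂ) (a42 : ℝ) (ha : 0 < a42) (T : ℝ) (hT : 0 < T)
    (g : ℝ → ℝ) (hg : ContinuousOn g (Set.Icc 0 T))
    (K : Set ℂ) (hK : IsCompact K) :
    ∃ C : ℝ, 0 < C ∧ ∀ z ∈ K, ∀ t ∈ Set.Icc (0 : ℝ) T, ∀ y : ℝ,
      ‖Complex.exp ((↑(|g t| * (‖z‖ + |y|)) : ℂ) - Complex.I *
          ((-1 : ℂ) ^ (n + 1) * (a42 : ℂ) * (z + sqrtI * (y : ℂ)) ^ (4 * n + 2) +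
            ∑ j ∈ Finset.Icc 1 (4 * n + 1), a j * (z + sqrtI * (y : ℂ)) ^ j))‖ ≤ C := by
  obtain ⟨R0, hR0⟩ := hK.isBounded.subset_closedBall 0
  obtain ⟨G0, hG0⟩ := isCompact_Icc.exists_bound_of_continuousOn hg
  set R : ℝ := max R0 0 with hRdef
  set G : ℝ := max G0 0 with hGdef
  have hRnn : 0 ≤ R := le_max_right _ _
  have hGnn : 0 ≤ G := le_max_right _ _
  have hzR : ∀ z ∈ K, ‖z‖ ≤ R := by
    intro z hz
    have h := hR0 hz
    rw [Metric.mem_closedBall, dist_zero_right] at h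
    exact h.trans (le_max_left _ _)
  have hgG : ∀ t ∈ Set.Icc (0:ℝ) T, |g t| ≤ G := by
    intro t ht
    have h := hG0 t ht
    rw [Real.norm_eq_abs] at h
    exact h.trans (le_max_left _ _)
  set SS1 : ℝ := ∑ k ∈ Finset.range (4*n+2), (((4*n+2).choose (k+1) : ℝ)) * R^(k+1) with hSS1
  set SS2 : ℝ := ∑ j ∈ Finset.Icc 1 (4*n+1), ‖a j‖ * (R+1)^j with hSS2
  have hSS1nn : 0 ≤ SS1 :=
    Finset.sum_nonneg fun k _ => mul_nonneg (Nat.cast_nonneg _) (pow_nonneg hRnn _)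
  have hSS2nn : 0 ≤ SS2 :=
    Finset.sum_nonneg fun j _ => mul_nonneg (norm_nonneg _) (pow_nonneg (by linarith) _)
  set D : ℝ := G*(R+1) + a42 * SS1 + SS2 with hDdef
  have hD : 0 ≤ D := by
    have h1 : 0 ≤ G*(R+1) := mul_nonneg hGnn (by linarith)
    have h2 : 0 ≤ a42 * SS1 := mul_nonneg ha.le hSS1nn
    linarith
  obtain ⟨B, hB0, hB⟩ := poly_bound D a42 hD ha (4*n+1)
  refine ⟨Real.exp B, Real.exp_pos B, ?_⟩
  intro z hz t ht y
  rw [Complex.norm_exp, Real.exp_le_exp]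
  set u : ℝ := |y| with hu
  have hun : 0 ≤ u := abs_nonneg y
  have h1u : (1:ℝ) ≤ 1 + u := by linarith
  have hup : (1:ℝ) + u ≤ (1+u)^(4*n+1) := le_self_pow₀ h1u (by omega)
  set w : ℂ := z + sqrtI * (y:ℂ) with hw
  have hwn : ‖w‖ ≤ R + u := by
    calc ‖w‖ ≤ ‖z‖ + ‖sqrtI * (y:ℂ)‖ := norm_add_le _ _
      _ = ‖z‖ + u := by rw [norm_mul, norm_sqrtI, one_mul, Complex.norm_real, Real.norm_eq_abs]
      _ ≤ R + u := by linarith [hzR z hz]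
  set A : ℂ := (-1 : ℂ) ^ (n + 1) * (a42 : ℂ) * w ^ (4 * n + 2) with hA
  set S : ℂ := ∑ j ∈ Finset.Icc 1 (4*n+1), a j * w ^ j with hS
  have hsplit : ((↑(|g t| * (‖z‖ + u)) : ℂ) - Complex.I * (A + S)).re
      = |g t| * (‖z‖ + u) + ((-Complex.I) * A).re + ((-Complex.I) * S).re := by
    have h : (↑(|g t| * (‖z‖ + u)) : ℂ) - Complex.I * (A + S)
        = ↑(|g t| * (‖z‖ + u)) + ((-Complex.I) * A + (-Complex.I) * S) := by ring
    rw [h, Complex.add_re, Complex.add_re, Complex.ofReal_re]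
    ring
  rw [hsplit]
  -- piece 1
  have hb1 : |g t| * (‖z‖ + u) ≤ G*(R+1) * (1+u)^(4*n+1) := by
    have h1 : |g t| * (‖z‖+u) ≤ G * (R+u) :=
      mul_le_mul (hgG t ht) (by linarith [hzR z hz])
        (by positivity) hGnn
    have h2 : G*(R+u) ≤ G*((R+1)*(1+u)) := by nlinarith [mul_nonneg hRnn hun]
    have h3 : G*(R+1)*(1+u) ≤ G*(R+1)*((1+u)^(4*n+1)) :=
      mul_le_mul_of_nonneg_left hup (mul_nonneg hGnn (by linarith))
    calc |g t| * (‖z‖+u) ≤ G*((R+1)*(1+u)) := le_trans h1 h2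
      _ = G*(R+1)*(1+u) := by ring
      _ ≤ G*(R+1)*(1+u)^(4*n+1) := h3
  -- piece 2
  have hb2 : ((-Complex.I) * A).re ≤ -(a42 * u^(4*n+2)) + a42 * SS1 * (1+u)^(4*n+1) := by
    have hexp : (-Complex.I) * A = (∑ k ∈ Finset.range (4*n+2),
        (-Complex.I) * ((-1:ℂ)^(n+1) * (a42:ℂ)) *
          (z^(k+1) * (sqrtI*(y:ℂ))^(4*n+2-(k+1)) * (((4*n+2).choose (k+1)) : ℂ)))
        + -((a42:ℂ) * (y:ℂ)^(4*n+2)) := by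
      rw [hA, hw, show (-Complex.I) * ((-1:ℂ)^(n+1) * (a42:ℂ) * (z + sqrtI*(y:ℂ))^(4*n+2))
        = ((-Complex.I) * ((-1:ℂ)^(n+1) * (a42:ℂ))) * (z + sqrtI*(y:ℂ))^(4*n+2) by ring]
      rw [add_pow, Finset.mul_sum, Finset.sum_range_succ']
      congr 1
      simp only [pow_zero, one_mul, Nat.choose_zero_right, Nat.cast_one, mul_one, Nat.sub_zero]
      rw [mul_pow, sqrtI_pow]
      have h2 : ((-1:ℂ))^(n+1) * (-1)^n = -1 := by
        rw [← pow_add]; exact Odd.neg_one_pow ⟨n, by ring⟩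
      calc (-Complex.I) * ((-1:ℂ)^(n+1) * (a42:ℂ)) * ((Complex.I * (-1:ℂ)^n) * ((y:ℂ))^(4*n+2))
          = -(Complex.I*Complex.I) * (((-1:ℂ)^(n+1) * (-1)^n)) * ((a42:ℂ) * ((y:ℂ))^(4*n+2)) := by
            ring
        _ = -((a42:ℂ) * ((y:ℂ))^(4*n+2)) := by rw [Complex.I_mul_I, h2]; ring
    rw [hexp, Complex.add_re, Complex.re_sum]
    have hlast : (-((a42:ℂ) * ((y:ℂ))^(4*n+2))).re = -(a42 * u^(4*n+2)) := by
      have hyu : u^(4*n+2) = y^(4*n+2) := Even.pow_abs ⟨2*n+1, by ring⟩ y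
      rw [hyu]
      norm_cast
    rw [hlast]
    have hsum : ∑ k ∈ Finset.range (4*n+2), ((-Complex.I) * ((-1:ℂ)^(n+1) * (a42:ℂ)) *
          (z^(k+1) * (sqrtI*(y:ℂ))^(4*n+2-(k+1)) * (((4*n+2).choose (k+1)) : ℂ))).re
        ≤ a42 * SS1 * (1+u)^(4*n+1) := by
      have hterm : ∀ k ∈ Finset.range (4*n+2),
          ((-Complex.I) * ((-1:ℂ)^(n+1) * (a42:ℂ)) *
            (z^(k+1) * (sqrtI*(y:ℂ))^(4*n+2-(k+1)) * (((4*n+2).choose (k+1)) : ℂ))).re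
          ≤ (a42 * ((((4*n+2).choose (k+1) : ℝ)) * R^(k+1))) * (1+u)^(4*n+1) := by
        intro k hk
        refine le_trans (Complex.re_le_norm _) ?_
        have habs : ‖(-Complex.I) * ((-1:ℂ)^(n+1) * (a42:ℂ)) *
            (z^(k+1) * (sqrtI*(y:ℂ))^(4*n+2-(k+1)) * (((4*n+2).choose (k+1)) : ℂ))‖
            = a42 * (‖z‖^(k+1) * u^(4*n+2-(k+1)) * (((4*n+2).choose (k+1) : ℝ))) := by
          have hs : ‖sqrtI*(y:ℂ)‖ = u := by
            rw [norm_mul, norm_sqrtI, one_mul, Complex.norm_real, Real.norm_eq_abs]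
          simp [norm_mul, norm_pow, Complex.norm_I, Complex.norm_real, abs_of_pos ha, hs,
            Complex.norm_natCast, norm_sqrtI, hu]
        rw [habs]
        have hz1 : ‖z‖ ^ (k+1) ≤ R^(k+1) :=
          pow_le_pow_left₀ (norm_nonneg z) (hzR z hz) (k+1)
        have hu1 : u^(4*n+2-(k+1)) ≤ (1+u)^(4*n+1) := by
          calc u^(4*n+2-(k+1)) ≤ (1+u)^(4*n+2-(k+1)) :=
                pow_le_pow_left₀ hun (by linarith) _
            _ ≤ (1+u)^(4*n+1) := pow_le_pow_right₀ h1u (by omega)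
        calc a42 * (‖z‖^(k+1) * u^(4*n+2-(k+1)) * (((4*n+2).choose (k+1) : ℝ)))
            ≤ a42 * (R^(k+1) * (1+u)^(4*n+1) * (((4*n+2).choose (k+1) : ℝ))) := by
              apply mul_le_mul_of_nonneg_left _ ha.le
              apply mul_le_mul_of_nonneg_right _ (Nat.cast_nonneg _)
              exact mul_le_mul hz1 hu1 (pow_nonneg hun _) (pow_nonneg hRnn _)
          _ = (a42 * ((((4*n+2).choose (k+1) : ℝ)) * R^(k+1))) * (1+u)^(4*n+1) := by ring
      calc ∑ k ∈ Finset.range (4*n+2), ((-Complex.I) * ((-1:ℂ)^(n+1) * (a42:ℂ)) *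
            (z^(k+1) * (sqrtI*(y:ℂ))^(4*n+2-(k+1)) * (((4*n+2).choose (k+1)) : ℂ))).re
          ≤ ∑ k ∈ Finset.range (4*n+2),
              (a42 * ((((4*n+2).choose (k+1) : ℝ)) * R^(k+1))) * (1+u)^(4*n+1) :=
            Finset.sum_le_sum hterm
        _ = a42 * SS1 * (1+u)^(4*n+1) := by
            rw [← Finset.sum_mul, hSS1, Finset.mul_sum]
    linarith
  -- piece 3
  have hb3 : ((-Complex.I) * S).re ≤ SS2 * (1+u)^(4*n+1) := by
    refine le_trans (Complex.re_le_norm _) ?_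
    rw [norm_mul]
    have hnegI : ‖-Complex.I‖ = 1 := by simp
    rw [hnegI, one_mul]
    calc ‖S‖ ≤ ∑ j ∈ Finset.Icc 1 (4*n+1), ‖a j * w^j‖ := by
          rw [hS]; exact norm_sum_le _ _
      _ ≤ ∑ j ∈ Finset.Icc 1 (4*n+1), (‖a j‖ * (R+1)^j) * (1+u)^(4*n+1) := by
          apply Finset.sum_le_sum
          intro j hj
          rw [Finset.mem_Icc] at hj
          rw [norm_mul, norm_pow]
          have hwj : ‖w‖ ^ j ≤ (R+1)^j * (1+u)^(4*n+1) := by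
            calc ‖w‖ ^ j ≤ ((R+1)*(1+u))^j := by
                  apply pow_le_pow_left₀ (norm_nonneg w)
                  have := hwn
                  nlinarith [mul_nonneg hRnn hun]
              _ = (R+1)^j * (1+u)^j := mul_pow _ _ _
              _ ≤ (R+1)^j * (1+u)^(4*n+1) :=
                  mul_le_mul_of_nonneg_left (pow_le_pow_right₀ h1u (by omega))
                    (pow_nonneg (by linarith) _)
          calc ‖a j‖ * ‖w‖ ^ j
              ≤ ‖a j‖ * ((R+1)^j * (1+u)^(4*n+1)) :=
                mul_le_mul_of_nonneg_left hwj (norm_nonneg _)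
            _ = (‖a j‖ * (R+1)^j) * (1+u)^(4*n+1) := by
                ring
      _ = SS2 * (1+u)^(4*n+1) := by rw [hSS2, Finset.sum_mul]
  have hB' : D * (1+u)^(4*n+1) - a42 * u^(4*n+2) ≤ B := hB u hun
  have hDeq : D*(1+u)^(4*n+1)
      = G*(R+1)*(1+u)^(4*n+1) + a42*SS1*(1+u)^(4*n+1) + SS2*(1+u)^(4*n+1) := by
    rw [hDdef]; ring
  linarith
end
end

section
/- Let k : ℂ → ℂ be analytic and let V : [0,T]×ℂ → ℂ be jointly continuous, analytic in the second variable, and continuously differentiable in t. Suppose for fixed t ∈ (0,T] and x ∈ ℝ the family of random variables h^{-1}·(exp(−i∫₀^h V(t+h−s, x+√i B_s)ds) − 1)·k(x+√i B_h), 0 < h ≤ ε, is dominated by an integrable function (Assumption II(ii)). Then lim_{h↘0} E[h^{-1}(exp(−i∫₀^h V(t+h−s, x+√i B_s) ds) − 1)·k(x + √i B_h)] = −i·V(t,x)·k(x). -/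
open MeasureTheory ProbabilityTheory Filter Complex Set

open Topology

noncomputable section

lemma tendsto_expRatio :
    Tendsto (fun w : ℂ => if w = 0 then 1 else (Complex.exp w - 1) / w) (𝓝 0) (𝓝 1) := by
  have h1 : HasDerivAt Complex.exp 1 0 := by simpa using Complex.hasDerivAt_exp 0
  rw [hasDerivAt_iff_tendsto_slope] at h1
  rw [← nhdsNE_sup_pure (0 : ℂ), tendsto_sup]
  constructor
  · refine h1.congr' ?_
    filter_upwards [self_mem_nhdsWithin] with w hw
    simp only [mem_compl_iff, mem_singleton_iff] at hw
    simp [slope_def_field, hw]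
  · simpa using tendsto_pure_nhds (fun w : ℂ => if w = 0 then 1 else (Complex.exp w - 1) / w) 0

set_option maxHeartbeats 1000000 in
/-- Identification of the potential term in the generator:
`lim_{h↘0} E[h⁻¹(exp(-i∫₀^h V(t+h-s, x+√i B_s)ds) - 1) k(x+√i B_h)] = -i V(t,x) k(x)`. -/
theorem stmt_11 {Ω : Type*} [MeasureSpace Ω] [IsProbabilityMeasure (volume : Measure Ω)]
    (B : ℝ → Ω → ℝ) (hB : IsBrownianMotion B) (T : ℝ) (hT : 0 < T)
    (k : ℂ → ℂ) (hk : Differentiable ℂ k)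
    (V : ℝ → ℂ → ℂ)
    (hVc : Continuous fun p : ℝ × ℂ => V p.1 p.2)
    (hVa : ∀ s : ℝ, Differentiable ℂ (V s))
    (hVt : ∀ z : ℂ, Differentiable ℝ (fun s : ℝ => V s z) ∧
      Continuous (fun s : ℝ => deriv (fun τ : ℝ => V τ z) s))
    (t : ℝ) (ht : t ∈ Set.Ioc (0 : ℝ) T) (x : ℝ) (ε : ℝ) (hε : 0 < ε)
    (hdom : ∃ g : Ω → ℝ, Integrable g (volume : Measure Ω) ∧
      ∀ᵐ ω ∂(volume : Measure Ω), ∀ h ∈ Set.Ioc (0 : ℝ) ε,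
        ‖(h : ℂ)⁻¹ * (Complex.exp (-Complex.I * ∫ s in (0 : ℝ)..h,
              V (t + h - s) ((x : ℂ) + sqrtI * (B s ω : ℂ))) - 1) *
            k ((x : ℂ) + sqrtI * (B h ω : ℂ))‖ ≤ g ω) :
    Tendsto (fun h : ℝ => ∫ ω, (h : ℂ)⁻¹ *
        (Complex.exp (-Complex.I * ∫ s in (0 : ℝ)..h,
            V (t + h - s) ((x : ℂ) + sqrtI * (B s ω : ℂ))) - 1) *
        k ((x : ℂ) + sqrtI * (B h ω : ℂ)) ∂(volume : Measure Ω))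
      (nhdsWithin 0 (Set.Ioi 0))
      (nhds (-Complex.I * V t (x : ℂ) * k (x : ℂ))) := by
  obtain ⟨g, hg_int, hg_bd⟩ := hdom
  have hkc : Continuous k := hk.continuous
  have hVc2 : ∀ (f : ℝ × ℝ → ℝ) (gg : ℝ × ℝ → ℂ),
      Continuous f → Continuous gg → Continuous fun a => V (f a) (gg a) :=
    fun f gg hf hg => hVc.comp (hf.prodMk hg)
  have hVm2 : ∀ (f : ℝ × Ω → ℝ) (gg : ℝ × Ω → ℂ),
      Measurable f → Measurable gg → Measurable fun a => V (f a) (gg a) :=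
    fun f gg hf hg => hVc.measurable.comp (hf.prodMk hg)
  -- measurability of the integrand, for each h > 0
  have hFmeas : ∀ h : ℝ, 0 < h → AEStronglyMeasurable (fun ω => (h : ℂ)⁻¹ *
      (Complex.exp (-Complex.I * ∫ s in (0 : ℝ)..h,
          V (t + h - s) ((x : ℂ) + sqrtI * (B s ω : ℂ))) - 1) *
      k ((x : ℂ) + sqrtI * (B h ω : ℂ))) (volume : Measure Ω) := by
    intro h hh
    have hq : ∀ n : ℕ, Measurable fun p : ℝ × Ω =>
        V (t + h - p.1) ((x : ℂ) + sqrtI * (B ((⌊p.1 * n⌋₊ : ℝ) / n) p.2 : ℂ)) := by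
      intro n
      have h0 : Measurable fun p : Ω × ℕ => B ((p.2 : ℝ) / n) p.1 :=
        measurable_from_prod_countable_left fun k0 => hB.meas ((k0 : ℝ) / n)
      have h1 : Measurable fun p : ℝ × Ω => B ((⌊p.1 * n⌋₊ : ℝ) / n) p.2 := by
        have h2 : Measurable fun p : ℝ × Ω => ((p.2, ⌊p.1 * n⌋₊) : Ω × ℕ) :=
          measurable_snd.prodMk
            (Nat.measurable_floor.comp (measurable_fst.mul_const (n : ℝ)))
        exact h0.comp h2
      exact hVm2 (fun p : ℝ × Ω => t + h - p.1)
        (fun p : ℝ × Ω => (x : ℂ) + sqrtI * (B ((⌊p.1 * n⌋₊ : ℝ) / n) p.2 : ℂ))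
        (measurable_const.sub measurable_fst)
        (measurable_const.add (measurable_const.mul (Complex.measurable_ofReal.comp h1)))
    have hFnm : ∀ n : ℕ, AEMeasurable (fun ω => ∫ s in Ioc (0 : ℝ) h,
        V (t + h - s) ((x : ℂ) + sqrtI * (B ((⌊s * n⌋₊ : ℝ) / n) ω : ℂ)))
        (volume : Measure Ω) := by
      intro n
      exact ((hq n).stronglyMeasurable.integral_prod_left'
        (μ := (volume : Measure ℝ).restrict (Ioc 0 h))).measurable.aemeasurable
    have hlimI : ∀ᵐ ω ∂(volume : Measure Ω), Tendsto (fun n : ℕ => ∫ s in Ioc (0 : ℝ) h,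
        V (t + h - s) ((x : ℂ) + sqrtI * (B ((⌊s * n⌋₊ : ℝ) / n) ω : ℂ))) atTop
        (𝓝 (∫ s in Ioc (0 : ℝ) h, V (t + h - s) ((x : ℂ) + sqrtI * (B s ω : ℂ)))) := by
      filter_upwards [hB.cont] with ω hcont
      have hψ : Continuous fun p : ℝ × ℝ =>
          V (t + h - p.1) ((x : ℂ) + sqrtI * (B p.2 ω : ℂ)) :=
        hVc2 (fun p : ℝ × ℝ => t + h - p.1)
          (fun p : ℝ × ℝ => (x : ℂ) + sqrtI * (B p.2 ω : ℂ))
          (continuous_const.sub continuous_fst)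
          (continuous_const.add (continuous_const.mul
            (Complex.continuous_ofReal.comp (hcont.comp continuous_snd))))
      obtain ⟨C, hC⟩ := (isCompact_Icc.prod isCompact_Icc :
          IsCompact (Icc (0 : ℝ) h ×ˢ Icc (0 : ℝ) h)).exists_bound_of_continuousOn
          hψ.continuousOn
      have hstep_mem : ∀ (n : ℕ) (s : ℝ), s ∈ Ioc (0 : ℝ) h →
          ((s, (⌊s * n⌋₊ : ℝ) / n) : ℝ × ℝ) ∈ Icc (0 : ℝ) h ×ˢ Icc (0 : ℝ) h := by
        intro n s hs
        have hs0 : (0 : ℝ) < s := hs.1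
        have hstep0 : (0 : ℝ) ≤ (⌊s * n⌋₊ : ℝ) / n := by positivity
        have hstep_le : (⌊s * n⌋₊ : ℝ) / n ≤ s := by
          rcases Nat.eq_zero_or_pos n with rfl | hn
          · simpa using hs0.le
          · rw [div_le_iff₀ (by exact_mod_cast hn)]
            exact Nat.floor_le (by positivity)
        exact ⟨⟨hs0.le, hs.2⟩, hstep0, hstep_le.trans hs.2⟩
      apply tendsto_integral_of_dominated_convergence (bound := fun _ => C)
      · intro n
        exact ((hq n).comp (measurable_id.prodMk measurable_const)).aestronglyMeasurable
      · exact integrableOn_const measure_Ioc_lt_top.ne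
      · intro n
        rw [ae_restrict_iff' measurableSet_Ioc]
        exact Eventually.of_forall fun s hs => hC _ (hstep_mem n s hs)
      · rw [ae_restrict_iff' measurableSet_Ioc]
        refine Eventually.of_forall fun s hs => ?_
        have h1 : Tendsto (fun n : ℕ => (⌊s * (n : ℝ)⌋₊ : ℝ) / (n : ℝ)) atTop (𝓝 s) :=
          (tendsto_nat_floor_mul_div_atTop hs.1.le).comp tendsto_natCast_atTop_atTop
        have h2 : Continuous fun u : ℝ =>
            V (t + h - s) ((x : ℂ) + sqrtI * (B u ω : ℂ)) :=
          hψ.comp (continuous_const.prodMk continuous_id)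
        exact (h2.tendsto s).comp h1
    have hI : AEMeasurable (fun ω => ∫ s in (0 : ℝ)..h,
        V (t + h - s) ((x : ℂ) + sqrtI * (B s ω : ℂ))) (volume : Measure Ω) := by
      have := aemeasurable_of_tendsto_metrizable_ae atTop hFnm hlimI
      simpa only [intervalIntegral.integral_of_le hh.le] using this
    have hkmeas : Measurable fun ω => k ((x : ℂ) + sqrtI * (B h ω : ℂ)) :=
      hkc.measurable.comp (measurable_const.add
        (measurable_const.mul (Complex.measurable_ofReal.comp (hB.meas h))))
    exact ((aemeasurable_const.mul ((Complex.measurable_exp.comp_aemeasurable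
      (aemeasurable_const.mul hI)).sub aemeasurable_const)).mul
      hkmeas.aemeasurable).aestronglyMeasurable
  -- a.e. pointwise limit
  have hptlim : ∀ᵐ ω ∂(volume : Measure Ω), Tendsto (fun h : ℝ => (h : ℂ)⁻¹ *
      (Complex.exp (-Complex.I * ∫ s in (0 : ℝ)..h,
          V (t + h - s) ((x : ℂ) + sqrtI * (B s ω : ℂ))) - 1) *
      k ((x : ℂ) + sqrtI * (B h ω : ℂ)))
      (𝓝[>] (0 : ℝ)) (𝓝 (-Complex.I * V t (x : ℂ) * k (x : ℂ))) := by
    filter_upwards [hB.init, hB.cont] with ω hω0 hωc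
    set γ : ℝ → ℂ := fun u => (x : ℂ) + sqrtI * (B u ω : ℂ) with hγ
    have hγc : Continuous γ :=
      continuous_const.add (continuous_const.mul (Complex.continuous_ofReal.comp hωc))
    have hγ0 : γ 0 = (x : ℂ) := by simp [hγ, hω0]
    set I : ℝ → ℂ := fun h => ∫ s in (0 : ℝ)..h, V (t + h - s) (γ s) with hIdef
    have hφ : Continuous fun p : ℝ × ℝ => V (t + p.1 - p.2) (γ p.2) :=
      hVc2 (fun p : ℝ × ℝ => t + p.1 - p.2) (fun p : ℝ × ℝ => γ p.2)
        ((continuous_const.add continuous_fst).sub continuous_snd)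
        (hγc.comp continuous_snd)
    -- Step 1 : h⁻¹ ∫ → V t x
    have hT1 : Tendsto (fun h : ℝ => (h : ℂ)⁻¹ * I h) (𝓝[>] (0 : ℝ)) (𝓝 (V t (x : ℂ))) := by
      rw [Metric.tendsto_nhdsWithin_nhds]
      intro δ hδ
      have hφ0 : V (t + 0 - 0) (γ 0) = V t (x : ℂ) := by rw [hγ0]; norm_num
      obtain ⟨r, hr, hball⟩ :=
        Metric.continuousAt_iff.1 (hφ.continuousAt (x := ((0 : ℝ), (0 : ℝ)))) (δ / 2)
          (half_pos hδ)
      refine ⟨r, hr, fun {h} hh hhr => ?_⟩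
      have hh0 : (0 : ℝ) < h := hh
      rw [Real.dist_eq, sub_zero, abs_of_pos hh0] at hhr
      have hkey : ∀ s ∈ Set.uIoc (0 : ℝ) h, ‖V (t + h - s) (γ s) - V t (x : ℂ)‖ ≤ δ / 2 := by
        intro s hs
        rw [Set.uIoc_of_le hh0.le] at hs
        have hdist : dist ((h, s) : ℝ × ℝ) ((0 : ℝ), (0 : ℝ)) < r := by
          rw [Prod.dist_eq]
          simp only [Real.dist_eq, sub_zero]
          rw [max_lt_iff, abs_of_pos hh0, abs_of_pos hs.1]
          exact ⟨hhr, lt_of_le_of_lt hs.2 hhr⟩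
        have h3 := hball hdist
        rw [hφ0, dist_eq_norm] at h3
        exact h3.le
      have hcz : (h : ℂ) ≠ 0 := Complex.ofReal_ne_zero.2 hh0.ne'
      have hint : IntervalIntegrable (fun s => V (t + h - s) (γ s)) volume 0 h :=
        (hφ.comp (continuous_const.prodMk continuous_id)).intervalIntegrable 0 h
      have hIsub : I h - (h : ℂ) * V t (x : ℂ) =
          ∫ s in (0 : ℝ)..h, (V (t + h - s) (γ s) - V t (x : ℂ)) := by
        rw [intervalIntegral.integral_sub hint intervalIntegrable_const,
          intervalIntegral.integral_const]
        simp [hIdef, Complex.real_smul]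
      have hnorm : ‖I h - (h : ℂ) * V t (x : ℂ)‖ ≤ δ / 2 * |h - 0| := by
        rw [hIsub]
        exact intervalIntegral.norm_integral_le_of_norm_le_const hkey
      rw [dist_eq_norm]
      have heq : (h : ℂ)⁻¹ * I h - V t (x : ℂ) = (h : ℂ)⁻¹ * (I h - (h : ℂ) * V t (x : ℂ)) := by
        field_simp
      calc ‖(h : ℂ)⁻¹ * I h - V t (x : ℂ)‖
          = ‖(h : ℂ)⁻¹‖ * ‖I h - (h : ℂ) * V t (x : ℂ)‖ := by rw [heq, norm_mul]
        _ ≤ ‖(h : ℂ)⁻¹‖ * (δ / 2 * |h - 0|) := by gcongr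
        _ = δ / 2 := by
            rw [sub_zero, norm_inv, Complex.norm_real, Real.norm_eq_abs, abs_of_pos hh0]
            field_simp
        _ < δ := by linarith
    -- Step 2 : I h → 0
    have hI0 : Tendsto I (𝓝[>] (0 : ℝ)) (𝓝 0) := by
      have hcast : Tendsto (fun h : ℝ => (h : ℂ)) (𝓝[>] (0 : ℝ)) (𝓝 0) := by
        have h4 := (Complex.continuous_ofReal.tendsto 0).mono_left
          (nhdsWithin_le_nhds (s := Set.Ioi (0 : ℝ)))
        simpa using h4
      have h5 := hcast.mul hT1
      rw [zero_mul] at h5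
      refine h5.congr' ?_
      filter_upwards [self_mem_nhdsWithin] with h hh
      have hcz : (h : ℂ) ≠ 0 := Complex.ofReal_ne_zero.2 (ne_of_gt hh)
      field_simp
    have hw0 : Tendsto (fun h : ℝ => -Complex.I * I h) (𝓝[>] (0 : ℝ)) (𝓝 0) := by
      have h6 := (tendsto_const_nhds (x := -Complex.I)).mul hI0
      simpa using h6
    have hE : Tendsto (fun h : ℝ =>
        if -Complex.I * I h = 0 then 1 else (Complex.exp (-Complex.I * I h) - 1) /
          (-Complex.I * I h)) (𝓝[>] (0 : ℝ)) (𝓝 1) :=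
      tendsto_expRatio.comp hw0
    have hkpart : Tendsto (fun h : ℝ => k (γ h)) (𝓝[>] (0 : ℝ)) (𝓝 (k (x : ℂ))) := by
      have h7 := ((hkc.comp hγc).tendsto 0).mono_left
        (nhdsWithin_le_nhds (s := Set.Ioi (0 : ℝ)))
      rw [Function.comp_apply, hγ0] at h7
      exact h7
    have hmain := (((tendsto_const_nhds (x := -Complex.I)).mul hT1).mul hE).mul hkpart
    rw [show -Complex.I * V t (x : ℂ) * 1 * k (x : ℂ)
        = -Complex.I * V t (x : ℂ) * k (x : ℂ) by ring] at hmain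
    refine hmain.congr fun h => ?_
    show -Complex.I * ((h : ℂ)⁻¹ * I h) *
        (if -Complex.I * I h = 0 then 1 else (Complex.exp (-Complex.I * I h) - 1) /
          (-Complex.I * I h)) * k (γ h)
      = (h : ℂ)⁻¹ * (Complex.exp (-Complex.I * I h) - 1) * k (γ h)
    congr 1
    by_cases hwz : -Complex.I * I h = 0
    · have hIz : I h = 0 := by
        have h8 : Complex.I * (-Complex.I * I h) = I h := by
          rw [← mul_assoc, mul_neg, Complex.I_mul_I]
          ring
        rw [hwz, mul_zero] at h8
        exact h8.symm
      simp [hwz, hIz]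
    · rw [if_neg hwz]
      have h9 : -Complex.I * ((h : ℂ)⁻¹ * I h) = (h : ℂ)⁻¹ * (-Complex.I * I h) := by ring
      rw [h9, mul_assoc, mul_div_assoc', mul_comm (-Complex.I * I h),
        mul_div_assoc, div_self hwz, mul_one]
  -- dominated convergence
  have h_bound : ∀ᶠ h : ℝ in 𝓝[>] (0 : ℝ), ∀ᵐ ω ∂(volume : Measure Ω),
      ‖(h : ℂ)⁻¹ * (Complex.exp (-Complex.I * ∫ s in (0 : ℝ)..h,
          V (t + h - s) ((x : ℂ) + sqrtI * (B s ω : ℂ))) - 1) *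
        k ((x : ℂ) + sqrtI * (B h ω : ℂ))‖ ≤ g ω := by
    filter_upwards [Ioc_mem_nhdsGT hε] with h hh
    filter_upwards [hg_bd] with ω hω
    exact hω h hh
  have hFmeas' : ∀ᶠ h : ℝ in 𝓝[>] (0 : ℝ), AEStronglyMeasurable (fun ω => (h : ℂ)⁻¹ *
      (Complex.exp (-Complex.I * ∫ s in (0 : ℝ)..h,
          V (t + h - s) ((x : ℂ) + sqrtI * (B s ω : ℂ))) - 1) *
      k ((x : ℂ) + sqrtI * (B h ω : ℂ))) (volume : Measure Ω) := by
    filter_upwards [self_mem_nhdsWithin] with h hh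
    exact hFmeas h hh
  have hmain := tendsto_integral_filter_of_dominated_convergence
    (μ := (volume : Measure Ω)) (l := 𝓝[>] (0 : ℝ))
    (f := fun _ : Ω => -Complex.I * V t (x : ℂ) * k (x : ℂ)) g hFmeas' h_bound hg_int hptlim
  simpa using hmain
end
end
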